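/- Let a, b > 0 and λ > −a, and set ρ* ∈ (0,1) with F(ρ*) = 0 where F(ρ) = (a+λρ)(1−ρ) − bρ, G(ρ) = (a+λρ)(1−ρ) + bρ, χ(ρ) = ρ(1−ρ). Then G(ρ*) + 2F'(ρ*)χ(ρ*) has the same sign as λ, i.e. G(ρ*) + 2F'(ρ*)χ(ρ*) = λ·c for some c > 0 (equivalently, it is positive iff λ > 0, zero iff λ = 0, negative iff λ < 0). -/

import Mathlib

/-!
At a root `ρ` of `F` we have `G(ρ) = 2bρ`, and substituting `bρ = (a + λρ)(1 - ρ)` collapses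
`G(ρ) + 2F'(ρ)χ(ρ)` to `2λρ(1 - ρ)²`, whose cofactor of `λ` is positive on `(0,1)`.
-/

theorem hasDerivAt_affine_mul_one_sub_sub (a b l x : ℝ) :
    HasDerivAt (fun ρ : ℝ => (a + l * ρ) * (1 - ρ) - b * ρ)
      (l * (1 - x) - (a + l * x) - b) x := by
  have hAffine : HasDerivAt (fun ρ : ℝ => a + l * ρ) l x := by
    simpa using ((hasDerivAt_id x).const_mul l).const_add a
  have hOneSub : HasDerivAt (fun ρ : ℝ => 1 - ρ) (-1) x := by
    simpa using (hasDerivAt_id x).const_sub 1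
  exact ((hAffine.mul hOneSub).sub ((hasDerivAt_id x).const_mul b)).congr_deriv (by ring)

theorem add_two_mul_deriv_mul_eq_of_root {a b l ρ : ℝ}
    (hroot : (a + l * ρ) * (1 - ρ) - b * ρ = 0) :
    ((a + l * ρ) * (1 - ρ) + b * ρ) + 2 * (l * (1 - ρ) - (a + l * ρ) - b) * (ρ * (1 - ρ))
      = l * (2 * ρ * (1 - ρ) ^ 2) := by
  linear_combination (1 - 2 * ρ) * hroot

theorem stmt10_general (a b l ρstar : ℝ)
    (hρ : ρstar ∈ Set.Ioo (0 : ℝ) 1)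
    (hzero : (a + l * ρstar) * (1 - ρstar) - b * ρstar = 0) :
    ∃ c : ℝ, 0 < c ∧
      ((a + l * ρstar) * (1 - ρstar) + b * ρstar)
        + 2 * deriv (fun ρ : ℝ => (a + l * ρ) * (1 - ρ) - b * ρ) ρstar
          * (ρstar * (1 - ρstar))
      = l * c := by
  obtain ⟨hpos, hlt⟩ := hρ
  have hcompl : 0 < 1 - ρstar := sub_pos.mpr hlt
  rw [(hasDerivAt_affine_mul_one_sub_sub a b l ρstar).deriv]
  exact ⟨2 * ρstar * (1 - ρstar) ^ 2, by positivity, add_two_mul_deriv_mul_eq_of_root hzero⟩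

/-- With `F(ρ) = (a+λρ)(1−ρ) − bρ`, `G(ρ) = (a+λρ)(1−ρ) + bρ`, `χ(ρ) = ρ(1−ρ)` and
`ρ* ∈ (0,1)` the root of `F`, the quantity `G(ρ*) + 2F'(ρ*)χ(ρ*)` has the same sign
as `λ`: it equals `λ·c` for some `c > 0`. -/
theorem stmt10 (a b l ρstar : ℝ) (ha : 0 < a) (hb : 0 < b) (hl : -a < l)
    (hρ : ρstar ∈ Set.Ioo (0 : ℝ) 1)
    (hzero : (a + l * ρstar) * (1 - ρstar) - b * ρstar = 0) :
    ∃ c : ℝ, 0 < c ∧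
      ((a + l * ρstar) * (1 - ρstar) + b * ρstar)
        + 2 * deriv (fun ρ : ℝ => (a + l * ρ) * (1 - ρ) - b * ρ) ρstar
          * (ρstar * (1 - ρstar))
      = l * c :=
  stmt10_general a b l ρstar hρ hzero
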